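/- Let G be a connected finite simple graph with ℓ = p(G) ≥ 2 pendant biconnected components, let P₁, …, P_ℓ be the pendant biconnected components of G, and let v₁, …, v_ℓ be pairwise nonadjacent vertices with v_i ∈ V(P_i) for each i. Let H be a connected finite simple graph with 2 ≤ |V(H)| ≤ ℓ and ℓ − |V(H)| ≠ 1. Then there exists an injective map φ : V(H) → {v₁, …, v_ℓ} such that the set of pendant biconnected components of the superposition F = G ⊕_φ H is exactly {P_i : v_i ∉ φ(V(H))}. -/

import Mathlib

/-!
The covered leaves `φ(V(H))` are chosen so that they are not exactly the leaves lying on one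
side of a bridge of `G`. Since `H` only adds edges between leaves that are nonadjacent in `G`,
the bridges of `F = G ⊕_φ H` are the bridges of `G` that do not separate the covered leaves,
and two vertices lie in one biconnected component of `F` iff no such bridge separates them.
Hence a pendant component of `G` without covered leaves keeps its bridge and stays pendant in
`F`, and a pendant component of `F` without covered leaves is pendant in `G`. A pendant
component of `F` containing the covered leaves would be the side of a bridge of `G` containing
all of them; by the choice, that side also holds an uncovered pendant component of `G`, which
stays pendant in `F` and so cannot lie inside another pendant component.
-/

open SimpleGraph

/-- The superposition `G ⊕_φ H` of `G` and `H` with respect to an injective map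
`φ : V(H) ↪ V(G)`. -/
def superpose {α β : Type*} (G : SimpleGraph α) (H : SimpleGraph β) (φ : β ↪ α) :
    SimpleGraph α :=
  G ⊔ SimpleGraph.map φ H

/-- The graph obtained from `G` by deleting all its bridges; its connected
components are the biconnected components of `G`. -/
def bicompGraph {α : Type*} (G : SimpleGraph α) : SimpleGraph α :=
  G.deleteEdges {e | G.IsBridge e}

/-- A biconnected component `C` of `G` is pendant if exactly one bridge of `G` has an
endpoint in `C`. -/
def IsPendant {α : Type*} (G : SimpleGraph α)
    (C : (bicompGraph G).ConnectedComponent) : Prop :=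
  ∃! e : Sym2 α, G.IsBridge e ∧ ∃ v ∈ C.supp, v ∈ e

def Set.NonCrossing {ι : Type*} (S T : Set ι) : Prop :=
  S ⊆ T ∨ T ⊆ S ∨ Disjoint S T ∨ S ∪ T = Set.univ

lemma Set.NonCrossing.preimage {ι κ : Type*} {S T : Set ι} (h : S.NonCrossing T)
    (f : κ → ι) : (f ⁻¹' S).NonCrossing (f ⁻¹' T) := by
  rcases h with h | h | h | h
  · exact Or.inl (Set.preimage_mono h)
  · exact Or.inr (Or.inl (Set.preimage_mono h))
  · exact Or.inr (Or.inr (Or.inl (h.preimage f)))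
  · exact Or.inr (Or.inr (Or.inr (by rw [← Set.preimage_union, h, Set.preimage_univ])))

namespace Finset

variable {ι : Type*} [Fintype ι]

/-- Two `m`-subsets of an `(m + 1)`-set `X ≠ univ`, obtained by deleting different points. -/
lemma exists_card_eq_not_nonCrossing {m : ℕ} (hm : 2 ≤ m) (hmn : m + 2 ≤ Fintype.card ι) :
    ∃ A B : Finset ι, A.card = m ∧ B.card = m ∧ ¬ (A : Set ι).NonCrossing B := by
  classical
  obtain ⟨X, -, hX⟩ := exists_subset_card_eq (s := (univ : Finset ι)) (n := m + 1)
    (by simp; omega)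
  obtain ⟨x, hx, y, hy, z, hz, hxy, hxz, hyz⟩ := two_lt_card.mp (by omega : 2 < X.card)
  obtain ⟨w, hw⟩ : ∃ w, w ∉ X := by
    by_contra! h
    have := card_le_card (fun w _ => h w : univ ⊆ X)
    simp only [card_univ] at this
    omega
  refine ⟨X.erase x, X.erase y, by simp [hx, hX], by simp [hy, hX], ?_⟩
  simp only [Set.NonCrossing, not_or, coe_erase, Set.not_disjoint_iff,
    Set.ne_univ_iff_exists_notMem]
  refine ⟨fun h => ?_, fun h => ?_, ⟨z, by simp [hz, hxz.symm, hyz.symm]⟩,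
    ⟨w, by simp [hw]⟩⟩
  · simpa using h (by simp [hy, hxy.symm] : y ∈ (X : Set ι) \ {x})
  · simpa using h (by simp [hx, hxy] : x ∈ (X : Set ι) \ {y})

lemma exists_card_eq_notMem_of_nonCrossing {𝒟 : Set (Finset ι)}
    (h𝒟 : ∀ S ∈ 𝒟, ∀ T ∈ 𝒟, (S : Set ι).NonCrossing T) (huniv : univ ∉ 𝒟)
    {m : ℕ} (hm : 2 ≤ m) (hmn : m ≤ Fintype.card ι) (hne : Fintype.card ι - m ≠ 1) :
    ∃ A : Finset ι, A.card = m ∧ A ∉ 𝒟 := by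
  rcases hmn.eq_or_lt with rfl | hlt
  · exact ⟨univ, card_univ, huniv⟩
  obtain ⟨A, B, hA, hB, hAB⟩ := exists_card_eq_not_nonCrossing (ι := ι) hm (by omega)
  by_cases hA𝒟 : A ∈ 𝒟
  · exact ⟨B, hB, fun hB𝒟 => hAB (h𝒟 A hA𝒟 B hB𝒟)⟩
  · exact ⟨A, hA, hA𝒟⟩

end Finset

namespace SimpleGraph

variable {V : Type*} {G Γ F : SimpleGraph V} {a b c d u : V}

lemma Reachable.mem_of_adj_closed {s : Set V} (hs : ∀ x y, x ∈ s → G.Adj x y → y ∈ s)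
    {x : V} (h : G.Reachable x u) (hx : x ∈ s) : u ∈ s := by
  obtain ⟨p⟩ := h
  induction p with
  | nil => exact hx
  | cons hadj _ ih => exact ih (hs _ _ hx hadj)

lemma Reachable.of_forall_adj_reachable (h : ∀ x y, Γ.Adj x y → G.Reachable x y) {u w : V}
    (huw : Γ.Reachable u w) : G.Reachable u w :=
  huw.mem_of_adj_closed (s := {y | G.Reachable u y}) (fun _ _ hx hxy => hx.trans (h _ _ hxy))
    (Reachable.refl u)

/-- A walk from `z` in `G - f` never meets `a`, so it also avoids the edge `s(a, b)`. -/
lemma Reachable.deleteEdges_of_not_reachable {f : Sym2 V} {z : V}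
    (h : (G.deleteEdges {f}).Reachable z u) (ha : ¬ (G.deleteEdges {f}).Reachable z a) (b : V) :
    (G.deleteEdges {s(a, b)}).Reachable z u := by
  classical
  obtain ⟨p⟩ := h
  have hp : ((G.deleteEdges {f}).deleteEdges {s(a, b)}).Reachable z u :=
    reachable_deleteEdges_iff_exists_walk.mpr
      ⟨p, fun hp => ha ⟨p.takeUntil a (p.fst_mem_support_of_mem_edges hp)⟩⟩
  exact hp.mono (by rw [deleteEdges_deleteEdges]; exact deleteEdges_anti (by simp))

def bridgeSide (G : SimpleGraph V) (a b : V) : Set V :=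
  {u | (G.deleteEdges {s(a, b)}).Reachable a u}

lemma mem_bridgeSide_self : a ∈ G.bridgeSide a b := Reachable.refl a

lemma mem_bridgeSide_swap : u ∈ G.bridgeSide b a ↔ (G.deleteEdges {s(a, b)}).Reachable b u := by
  rw [Sym2.eq_swap]; rfl

lemma IsBridge.disjoint_bridgeSide (h : G.IsBridge s(a, b)) :
    Disjoint (G.bridgeSide a b) (G.bridgeSide b a) :=
  Set.disjoint_left.mpr fun _ ha hb => isBridge_iff.mp h (ha.trans (mem_bridgeSide_swap.mp hb).symm)

lemma Connected.mem_bridgeSide_or (hG : G.Connected) (a b u : V) :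
    u ∈ G.bridgeSide a b ∨ u ∈ G.bridgeSide b a := by
  suffices (G.deleteEdges {s(a, b)}).Reachable a u ∨ (G.deleteEdges {s(a, b)}).Reachable b u from
    this.imp id mem_bridgeSide_swap.mpr
  refine (hG.preconnected a u).mem_of_adj_closed
    (s := {u | (G.deleteEdges {s(a, b)}).Reachable a u ∨ (G.deleteEdges {s(a, b)}).Reachable b u})
    (fun x y hx hxy => ?_) (Or.inl (Reachable.refl a))
  by_cases hxy' : s(x, y) = s(a, b)
  · rcases Sym2.eq_iff.mp hxy' with ⟨rfl, rfl⟩ | ⟨rfl, rfl⟩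
    · exact Or.inr (Reachable.refl _)
    · exact Or.inl (Reachable.refl _)
  · have hadj : (G.deleteEdges {s(a, b)}).Adj x y := deleteEdges_adj.mpr ⟨hxy, hxy'⟩
    exact hx.imp (·.trans hadj.reachable) (·.trans hadj.reachable)

lemma IsBridge.bridgeSide_swap (hG : G.Connected) (h : G.IsBridge s(a, b)) :
    G.bridgeSide b a = (G.bridgeSide a b)ᶜ := by
  ext u
  exact ⟨fun hu hu' => Set.disjoint_left.mp h.disjoint_bridgeSide hu' hu,
    (hG.mem_bridgeSide_or a b u).resolve_left⟩

/-- A side of `s(c, d)` avoiding `a` is connected in `G - s(a, b)`, so it lies on one side of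
`s(a, b)`. -/
lemma bridgeSide_subset_or_subset_compl (ha : a ∉ G.bridgeSide c d) :
    G.bridgeSide c d ⊆ G.bridgeSide a b ∨ G.bridgeSide c d ⊆ (G.bridgeSide a b)ᶜ := by
  have hreach : ∀ u ∈ G.bridgeSide c d, (G.deleteEdges {s(a, b)}).Reachable c u := fun _ hu =>
    Reachable.deleteEdges_of_not_reachable hu ha b
  by_cases hc : c ∈ G.bridgeSide a b
  · exact Or.inl fun u hu => Reachable.trans hc (hreach u hu)
  · exact Or.inr fun u hu hu' => hc (Reachable.trans hu' (hreach u hu).symm)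

lemma IsBridge.nonCrossing_bridgeSide (hG : G.Connected) (h : G.IsBridge s(c, d)) (a b : V) :
    (G.bridgeSide a b).NonCrossing (G.bridgeSide c d) := by
  by_cases ha : a ∈ G.bridgeSide c d
  · have ha' : a ∉ G.bridgeSide d c := Set.disjoint_left.mp h.disjoint_bridgeSide ha
    rcases bridgeSide_subset_or_subset_compl (b := b) ha' with hs | hs
    · rw [h.bridgeSide_swap hG, Set.compl_subset_iff_union] at hs
      exact Or.inr (Or.inr (Or.inr (Set.union_comm _ _ ▸ hs)))
    · rw [h.bridgeSide_swap hG, Set.compl_subset_compl] at hs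
      exact Or.inl hs
  · rcases bridgeSide_subset_or_subset_compl (b := b) ha with hs | hs
    · exact Or.inr (Or.inl hs)
    · exact Or.inr (Or.inr (Or.inl (Set.subset_compl_iff_disjoint_left.mp hs)))

/-- Deleting a common bridge `e` leaves `G ≤ F` with the same connectivity: the two sides of `e`
in `G` cover `V`, and they stay apart in `F - e`. -/
lemma IsBridge.reachable_deleteEdges_of_le (hle : G ≤ F) (hG : G.Connected) {e : Sym2 V}
    (hF : F.IsBridge e) {u w : V} (huw : (F.deleteEdges {e}).Reachable u w) :
    (G.deleteEdges {e}).Reachable u w := by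
  induction e with
  | h a b =>
  have key : ∀ {p q}, F.IsBridge s(p, q) → u ∈ G.bridgeSide p q →
      (F.deleteEdges {s(p, q)}).Reachable u w → (G.deleteEdges {s(p, q)}).Reachable u w := by
    intro p q hpq hu huw
    have hw : w ∈ G.bridgeSide p q := (hG.mem_bridgeSide_or p q w).resolve_right fun hw =>
      Set.disjoint_left.mp hpq.disjoint_bridgeSide
        ((Reachable.mono (deleteEdges_mono hle) hu).trans huw)
        (Reachable.mono (deleteEdges_mono hle) hw)
    exact Reachable.trans (Reachable.symm hu) hw
  rcases hG.mem_bridgeSide_or a b u with hu | hu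
  · exact key hF hu huw
  · rw [Sym2.eq_swap] at hF huw ⊢
    exact key hF hu huw

def Separates (G : SimpleGraph V) (e : Sym2 V) (s : Set V) : Prop :=
  ∃ u ∈ s, ∃ w ∈ s, ¬ (G.deleteEdges {e}).Reachable u w

lemma not_separates_range_iff {β : Type*} {e : Sym2 V} {f : β → V} :
    ¬ G.Separates e (Set.range f) ↔ ∀ x y, (G.deleteEdges {e}).Reachable (f x) (f y) := by
  simp [Separates]

end SimpleGraph

section Biconnected

variable {V : Type*} {G F : SimpleGraph V} {a b : V}

lemma bicompGraph_adj {u w : V} :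
    (bicompGraph G).Adj u w ↔ G.Adj u w ∧ ¬ G.IsBridge s(u, w) := by
  simp [bicompGraph]

lemma bicompGraph_le_deleteEdges {e : Sym2 V} (he : G.IsBridge e) :
    bicompGraph G ≤ G.deleteEdges {e} :=
  deleteEdges_anti (Set.singleton_subset_iff.mpr he)

lemma bicompGraph_mono (hle : G ≤ F) : bicompGraph G ≤ bicompGraph F := fun _ _ h =>
  have h := bicompGraph_adj.mp h
  bicompGraph_adj.mpr ⟨hle h.1, fun hF => h.2 (hF.anti hle)⟩

/-- If the first edge `s(u, x)` were a bridge, the rest of the path, which avoids `u`, would join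
`x` to `w` in `G - s(u, x)`. -/
lemma SimpleGraph.Walk.IsPath.bicompGraph_reachable {u w : V} {p : G.Walk u w} (hp : p.IsPath)
    (h : ∀ e, G.IsBridge e → (G.deleteEdges {e}).Reachable u w) :
    (bicompGraph G).Reachable u w := by
  induction p with
  | nil => rfl
  | @cons u x w hadj q ih =>
    rw [Walk.cons_isPath_iff] at hp
    have hnb : ¬ G.IsBridge s(u, x) := fun hb => by
      have hxw : (G.deleteEdges {s(u, x)}).Reachable x w :=
        reachable_deleteEdges_iff_exists_walk.mpr
          ⟨q, fun hq => hp.2 (q.fst_mem_support_of_mem_edges hq)⟩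
      exact isBridge_iff.mp hb ((h _ hb).trans hxw.symm)
    refine (bicompGraph_adj.mpr ⟨hadj, hnb⟩).reachable.trans (ih hp.1 fun e he => ?_)
    have hux : (G.deleteEdges {e}).Adj u x :=
      deleteEdges_adj.mpr ⟨hadj, fun h => hnb (Set.mem_singleton_iff.mp h ▸ he)⟩
    exact hux.reachable.symm.trans (h e he)

lemma bicompGraph_reachable_iff {u w : V} (h : G.Reachable u w) :
    (bicompGraph G).Reachable u w ↔
      ∀ e, G.IsBridge e → (G.deleteEdges {e}).Reachable u w := by
  refine ⟨fun hb e he => hb.mono (bicompGraph_le_deleteEdges he), fun hall => ?_⟩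
  obtain ⟨p, hp⟩ := h.exists_isPath
  exact hp.bicompGraph_reachable hall

lemma SimpleGraph.ConnectedComponent.supp_subset_bridgeSide
    {C : (bicompGraph G).ConnectedComponent} (h : G.IsBridge s(a, b)) {x : V} (hx : x ∈ C.supp)
    (hxs : x ∈ G.bridgeSide a b) :
    C.supp ⊆ G.bridgeSide a b := fun _ hu =>
  Reachable.trans hxs ((C.reachable_of_mem_supp hx hu).mono (bicompGraph_le_deleteEdges h))

lemma IsPendant.exists_supp_eq_bridgeSide {C : (bicompGraph G).ConnectedComponent}
    (hC : IsPendant G C) :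
    ∃ a b, G.IsBridge s(a, b) ∧ a ∈ C.supp ∧ C.supp = G.bridgeSide a b := by
  obtain ⟨e, ⟨he, a, haC, hae⟩, huniq⟩ := hC
  obtain ⟨b, rfl⟩ := Sym2.mem_iff_exists.mp hae
  refine ⟨a, b, he, haC,
    (C.supp_subset_bridgeSide he haC mem_bridgeSide_self).antisymm fun u hu => ?_⟩
  refine Reachable.mem_of_adj_closed (fun x y hx hxy => ?_) hu haC
  obtain ⟨hxy, hne⟩ := deleteEdges_adj.mp hxy
  exact C.mem_supp_of_adj_mem_supp hx
    (bicompGraph_adj.mpr ⟨hxy, fun hb => hne (huniq _ ⟨hb, x, hx, Sym2.mem_mk_left x y⟩)⟩)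

/-- Descend through bridges: if the component at `a` is not pendant, another bridge leaves it,
and its far side is a strictly smaller part of `G.bridgeSide a b`. -/
lemma SimpleGraph.Connected.exists_isPendant_subset_bridgeSide [Finite V] (hG : G.Connected)
    (h : G.IsBridge s(a, b)) :
    ∃ C : (bicompGraph G).ConnectedComponent, IsPendant G C ∧ C.supp ⊆ G.bridgeSide a b := by
  induction hn : (G.bridgeSide a b).ncard using Nat.strong_induction_on generalizing a b with
  | _ n ih =>
  set D := (bicompGraph G).connectedComponentMk a
  have hD : D.supp ⊆ G.bridgeSide a b := D.supp_subset_bridgeSide h rfl mem_bridgeSide_self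
  by_cases hDp : IsPendant G D
  · exact ⟨D, hDp, hD⟩
  obtain ⟨f, ⟨hf, c, hcD, hcf⟩, hfne⟩ :
      ∃ f, (G.IsBridge f ∧ ∃ x ∈ D.supp, x ∈ f) ∧ f ≠ s(a, b) := by
    by_contra! hno
    exact hDp ⟨s(a, b), ⟨h, a, rfl, Sym2.mem_mk_left a b⟩, hno⟩
  obtain ⟨d, rfl⟩ := Sym2.mem_iff_exists.mp hcf
  have ha : a ∉ G.bridgeSide d c := Set.disjoint_left.mp hf.disjoint_bridgeSide
    (D.supp_subset_bridgeSide hf hcD mem_bridgeSide_self rfl)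
  have hd : d ∈ G.bridgeSide a b := Reachable.trans (hD hcD)
    (deleteEdges_adj.mpr ⟨hf.reachable_iff_adj.mp (hG.preconnected c d), hfne⟩).reachable
  have hsub : G.bridgeSide d c ⊆ G.bridgeSide a b :=
    (bridgeSide_subset_or_subset_compl ha).resolve_right fun hs => hs mem_bridgeSide_self hd
  have hlt : (G.bridgeSide d c).ncard < n := hn ▸ Set.ncard_lt_ncard
    (ssubset_iff_subset_not_subset.mpr ⟨hsub, fun hs => ha (hs mem_bridgeSide_self)⟩)
  obtain ⟨C, hC, hCs⟩ := ih _ hlt (by rwa [Sym2.eq_swap]) rfl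
  exact ⟨C, hC, hCs.trans hsub⟩

def SimpleGraph.SparesPendantOnEachSide (G : SimpleGraph V) (s : Set V) : Prop :=
  ∀ a b, G.IsBridge s(a, b) → s ⊆ G.bridgeSide a b →
    ∃ C : (bicompGraph G).ConnectedComponent,
      IsPendant G C ∧ C.supp ⊆ G.bridgeSide a b ∧ Disjoint s C.supp

end Biconnected

section Superposition

variable {α β : Type*} {G : SimpleGraph α} {H : SimpleGraph β} {φ : β ↪ α}

lemma le_superpose : G ≤ superpose G H φ := le_sup_left

lemma superpose_adj {u w : α} :
    (superpose G H φ).Adj u w ↔ G.Adj u w ∨ ∃ x y, H.Adj x y ∧ φ x = u ∧ φ y = w := by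
  simp [superpose]

lemma superpose_deleteEdges_reachable_iff {e : Sym2 α} (he : ¬ G.Separates e (Set.range φ))
    {u w : α} :
    ((superpose G H φ).deleteEdges {e}).Reachable u w ↔ (G.deleteEdges {e}).Reachable u w := by
  refine ⟨Reachable.of_forall_adj_reachable fun x y hxy => ?_,
    Reachable.mono (deleteEdges_mono le_superpose)⟩
  obtain ⟨hxy, hne⟩ := deleteEdges_adj.mp hxy
  rcases superpose_adj.mp hxy with hxy | ⟨x, y, -, rfl, rfl⟩
  · exact (deleteEdges_adj.mpr ⟨hxy, hne⟩).reachable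
  · exact not_separates_range_iff.mp he x y

lemma reachable_superpose_deleteEdges_image (hH : H.Connected)
    (hφ : ∀ x y, H.Adj x y → ¬ G.Adj (φ x) (φ y)) {a b : α} (hab : G.Adj a b) (x y : β) :
    ((superpose G H φ).deleteEdges {s(a, b)}).Reachable (φ x) (φ y) := by
  refine ((hH.preconnected x y).map (Embedding.map φ H).toHom).mono fun u w huw => ?_
  obtain ⟨x', y', hxy, rfl, rfl⟩ := (map_adj _ _ _ _).mp huw
  refine deleteEdges_adj.mpr ⟨Or.inr huw, fun h => hφ x' y' hxy ?_⟩
  rcases Sym2.eq_iff.mp h with ⟨h1, h2⟩ | ⟨h1, h2⟩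
  · rwa [h1, h2]
  · rw [h1, h2]; exact hab.symm

lemma superpose_isBridge_iff (hG : G.Connected) (hH : H.Connected)
    (hφ : ∀ x y, H.Adj x y → ¬ G.Adj (φ x) (φ y)) {e : Sym2 α} :
    (superpose G H φ).IsBridge e ↔ G.IsBridge e ∧ ¬ G.Separates e (Set.range φ) := by
  induction e with
  | h a b =>
  refine ⟨fun h => ⟨h.anti le_superpose, ?_⟩, fun ⟨h, hsep⟩ => ?_⟩
  · have hab : G.Adj a b := (h.anti le_superpose).reachable_iff_adj.mp (hG.preconnected a b)
    exact not_separates_range_iff.mpr fun x y => h.reachable_deleteEdges_of_le le_superpose hG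
      (reachable_superpose_deleteEdges_image hH hφ hab x y)
  · exact isBridge_iff.mpr fun hab => isBridge_iff.mp h
      ((superpose_deleteEdges_reachable_iff hsep).mp hab)

lemma superpose_bicompGraph_reachable_iff (hG : G.Connected) (hH : H.Connected)
    (hφ : ∀ x y, H.Adj x y → ¬ G.Adj (φ x) (φ y)) {u w : α} :
    (bicompGraph (superpose G H φ)).Reachable u w ↔
      ∀ e, G.IsBridge e → ¬ G.Separates e (Set.range φ) →
        (G.deleteEdges {e}).Reachable u w := by
  rw [bicompGraph_reachable_iff ((hG.preconnected u w).mono le_superpose)]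
  refine forall_congr' fun e => ?_
  rw [superpose_isBridge_iff hG hH hφ, and_imp]
  exact imp_congr_right fun _ => imp_congr_right fun hsep =>
    superpose_deleteEdges_reachable_iff hsep

lemma superpose_bicompGraph_reachable_image (hG : G.Connected) (hH : H.Connected)
    (hφ : ∀ x y, H.Adj x y → ¬ G.Adj (φ x) (φ y)) (x y : β) :
    (bicompGraph (superpose G H φ)).Reachable (φ x) (φ y) :=
  (superpose_bicompGraph_reachable_iff hG hH hφ).mpr fun _ _ hsep =>
    not_separates_range_iff.mp hsep x y

/-- An edge `e` not separating the image of `φ` has all of it on one side; if `a` were not on that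
side, paths inside it would avoid `a`, hence `s(a, b)`, and `s(a, b)` would not separate the
image either. -/
lemma superpose_bicompGraph_reachable_image_of_separates (hG : G.Connected) (hH : H.Connected)
    (hφ : ∀ x y, H.Adj x y → ¬ G.Adj (φ x) (φ y)) {a b : α}
    (hsep : G.Separates s(a, b) (Set.range φ)) (z : β) :
    (bicompGraph (superpose G H φ)).Reachable a (φ z) := by
  refine (superpose_bicompGraph_reachable_iff hG hH hφ).mpr fun e _ he => ?_
  by_contra ha
  have hreach : ∀ t, (G.deleteEdges {s(a, b)}).Reachable (φ z) (φ t) := fun t =>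
    Reachable.deleteEdges_of_not_reachable (not_separates_range_iff.mp he z t)
      (fun h => ha h.symm) b
  exact not_separates_range_iff.mpr (fun x y => (hreach x).symm.trans (hreach y)) hsep

lemma IsPendant.exists_isPendant_superpose (hG : G.Connected) (hH : H.Connected)
    (hφ : ∀ x y, H.Adj x y → ¬ G.Adj (φ x) (φ y)) {C : (bicompGraph G).ConnectedComponent}
    (hC : IsPendant G C) (hCφ : Disjoint (Set.range φ) C.supp) :
    ∃ C' : (bicompGraph (superpose G H φ)).ConnectedComponent,
      IsPendant (superpose G H φ) C' ∧ C'.supp = C.supp := by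
  obtain ⟨a, b, hab, haC, hCab⟩ := hC.exists_supp_eq_bridgeSide
  have hsep : ¬ G.Separates s(a, b) (Set.range φ) := by
    have hb : ∀ x, (G.deleteEdges {s(a, b)}).Reachable b (φ x) := fun x =>
      mem_bridgeSide_swap.mp ((hG.mem_bridgeSide_or a b (φ x)).resolve_left fun h =>
        Set.disjoint_left.mp hCφ ⟨x, rfl⟩ (hCab ▸ h))
    exact not_separates_range_iff.mpr fun x y => (hb x).symm.trans (hb y)
  have hF : (superpose G H φ).IsBridge s(a, b) :=
    (superpose_isBridge_iff hG hH hφ).mpr ⟨hab, hsep⟩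
  set C' := (bicompGraph (superpose G H φ)).connectedComponentMk a
  have hC' : C'.supp = C.supp := by
    ext u
    rw [ConnectedComponent.mem_supp_iff, ConnectedComponent.eq]
    refine ⟨fun h => ?_, fun hu => ?_⟩
    · rw [hCab]
      exact (superpose_bicompGraph_reachable_iff hG hH hφ).mp h.symm _ hab hsep
    · exact (C.reachable_of_mem_supp hu haC).mono (bicompGraph_mono le_superpose)
  refine ⟨C', ⟨s(a, b), ⟨hF, a, rfl, Sym2.mem_mk_left a b⟩, ?_⟩, hC'⟩
  rintro e ⟨he, x, hx, hxe⟩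
  exact hC.unique ⟨he.anti le_superpose, x, hC' ▸ hx, hxe⟩
    ⟨hab, a, haC, Sym2.mem_mk_left a b⟩

lemma isBridge_superpose_of_mem_supp (hG : G.Connected) (hH : H.Connected)
    (hφ : ∀ x y, H.Adj x y → ¬ G.Adj (φ x) (φ y))
    {C' : (bicompGraph (superpose G H φ)).ConnectedComponent}
    (hC'φ : Disjoint (Set.range φ) C'.supp) {f : Sym2 α} (hf : G.IsBridge f) {x : α}
    (hx : x ∈ C'.supp) (hxf : x ∈ f) : (superpose G H φ).IsBridge f := by
  obtain ⟨y, rfl⟩ := Sym2.mem_iff_exists.mp hxf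
  refine (superpose_isBridge_iff hG hH hφ).mpr ⟨hf, fun hsep => ?_⟩
  obtain ⟨_, ⟨z, rfl⟩, -⟩ := id hsep
  exact Set.disjoint_left.mp hC'φ ⟨z, rfl⟩ (C'.mem_supp_iff _ |>.mpr
    ((ConnectedComponent.sound
      (superpose_bicompGraph_reachable_image_of_separates hG hH hφ hsep z)).symm.trans hx))

lemma IsPendant.exists_isPendant_of_superpose (hG : G.Connected) (hH : H.Connected)
    (hφ : ∀ x y, H.Adj x y → ¬ G.Adj (φ x) (φ y))
    {C' : (bicompGraph (superpose G H φ)).ConnectedComponent}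
    (hC' : IsPendant (superpose G H φ) C') (hC'φ : Disjoint (Set.range φ) C'.supp) :
    ∃ C : (bicompGraph G).ConnectedComponent, IsPendant G C ∧ C.supp = C'.supp := by
  obtain ⟨e, ⟨he, a, haC', hae⟩, -⟩ := id hC'
  set D := (bicompGraph G).connectedComponentMk a
  have hDC' : D.supp ⊆ C'.supp :=
    ConnectedComponent.connectedComponentMk_supp_subset_supp (bicompGraph_mono le_superpose) C' haC'
  have hC'D : C'.supp ⊆ D.supp := fun u hu => by
    refine Reachable.mem_of_adj_closed (fun x y hx hxy => ?_) (C'.reachable_of_mem_supp haC' hu) rfl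
    obtain ⟨hxy, hnb⟩ := bicompGraph_adj.mp hxy
    rcases superpose_adj.mp hxy with hxy | ⟨x', y', -, rfl, -⟩
    · exact D.mem_supp_of_adj_mem_supp hx (bicompGraph_adj.mpr ⟨hxy, fun hb => hnb
        (isBridge_superpose_of_mem_supp hG hH hφ hC'φ hb (hDC' hx) (Sym2.mem_mk_left _ _))⟩)
    · exact absurd (hDC' hx) (Set.disjoint_left.mp hC'φ ⟨x', rfl⟩)
  refine ⟨D, ⟨e, ⟨he.anti le_superpose, a, rfl, hae⟩, fun f ⟨hf, x, hx, hxf⟩ => ?_⟩,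
    hDC'.antisymm hC'D⟩
  exact hC'.unique
    ⟨isBridge_superpose_of_mem_supp hG hH hφ hC'φ hf (hDC' hx) hxf, x, hDC' hx, hxf⟩
    ⟨he, a, haC', hae⟩

/-- A pendant component of the superposition containing the image of `φ` would be a side of a
bridge of `G`; the pendant component of `G` spared on that side stays pendant and meets it. -/
lemma IsPendant.disjoint_range_of_superpose (hG : G.Connected) (hH : H.Connected)
    (hφ : ∀ x y, H.Adj x y → ¬ G.Adj (φ x) (φ y))
    (hspare : G.SparesPendantOnEachSide (Set.range φ))
    {C' : (bicompGraph (superpose G H φ)).ConnectedComponent}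
    (hC' : IsPendant (superpose G H φ) C') : Disjoint (Set.range φ) C'.supp := by
  rw [Set.disjoint_left]
  rintro _ ⟨z, rfl⟩ hz
  obtain ⟨a, b, hab, -, hC'ab⟩ := hC'.exists_supp_eq_bridgeSide
  obtain ⟨hGab, hsep⟩ := (superpose_isBridge_iff hG hH hφ).mp hab
  have hside : C'.supp = G.bridgeSide a b :=
    hC'ab.trans (Set.ext fun _ => superpose_deleteEdges_reachable_iff hsep)
  have hrange : Set.range φ ⊆ G.bridgeSide a b := by
    rintro _ ⟨x, rfl⟩
    rw [← hside, ConnectedComponent.mem_supp_iff]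
    exact (ConnectedComponent.sound
      (superpose_bicompGraph_reachable_image hG hH hφ z x)).symm.trans hz
  obtain ⟨C, hC, hCab, hCφ⟩ := hspare a b hGab hrange
  obtain ⟨C'', hC'', hC''C⟩ := hC.exists_isPendant_superpose hG hH hφ hCφ
  obtain ⟨u, hu⟩ := C.nonempty_supp
  obtain rfl : C'' = C' :=
    ConnectedComponent.eq_of_common_vertex (hC''C ▸ hu) (hside ▸ hCab hu)
  exact Set.disjoint_left.mp hCφ ⟨z, rfl⟩ (hC''C ▸ hz)

theorem pendant_supp_superpose (hG : G.Connected) (hH : H.Connected)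
    (hφ : ∀ x y, H.Adj x y → ¬ G.Adj (φ x) (φ y))
    (hspare : G.SparesPendantOnEachSide (Set.range φ)) :
    {S : Set α | ∃ C' : (bicompGraph (superpose G H φ)).ConnectedComponent,
        IsPendant (superpose G H φ) C' ∧ C'.supp = S} =
      {S : Set α | ∃ C : (bicompGraph G).ConnectedComponent,
        IsPendant G C ∧ Disjoint (Set.range φ) C.supp ∧ C.supp = S} := by
  ext S
  constructor
  · rintro ⟨C', hC', rfl⟩
    have hC'φ := IsPendant.disjoint_range_of_superpose hG hH hφ hspare hC'
    obtain ⟨C, hC, hCC'⟩ := IsPendant.exists_isPendant_of_superpose hG hH hφ hC' hC'φ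
    exact ⟨C, hC, hCC' ▸ hC'φ, hCC'⟩
  · rintro ⟨C, hC, hCφ, rfl⟩
    exact IsPendant.exists_isPendant_superpose hG hH hφ hC hCφ

end Superposition

/-- The image `v '' A` spares a pendant component on every side of every bridge as soon as `A` is
not the set of leaf indices on one side of a bridge; such an `A` of the required size exists
because these leaf sets are pairwise non-crossing. -/
lemma exists_embedding_sparesPendantOnEachSide {α β : Type*} [Fintype α] [Fintype β]
    {G : SimpleGraph α} (hG : G.Connected) {ℓ : ℕ}
    {P : Fin ℓ → (bicompGraph G).ConnectedComponent} (hPinj : Function.Injective P)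
    (hPpend : ∀ i, IsPendant G (P i)) (hPall : ∀ C, IsPendant G C → ∃ i, P i = C)
    {v : Fin ℓ → α} (hv : ∀ i, v i ∈ (P i).supp) (hcard2 : 2 ≤ Fintype.card β)
    (hcardℓ : Fintype.card β ≤ ℓ) (hne1 : ℓ - Fintype.card β ≠ 1) :
    ∃ φ : β ↪ α, Set.range φ ⊆ Set.range v ∧
      G.SparesPendantOnEachSide (Set.range φ) := by
  have hvP : ∀ i j, v i ∈ (P j).supp → i = j := fun i j h => hPinj ((hv i).symm.trans h)
  have hvinj : Function.Injective v := fun i j h => hvP i j (h ▸ hv j)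
  obtain ⟨A, hAcard, hA⟩ := Finset.exists_card_eq_notMem_of_nonCrossing
    (𝒟 := {A : Finset (Fin ℓ) |
      ∃ a b, G.IsBridge s(a, b) ∧ (A : Set (Fin ℓ)) = v ⁻¹' G.bridgeSide a b})
    (by
      rintro _ ⟨a, b, -, hS⟩ _ ⟨c, d, hcd, hT⟩
      rw [hS, hT]
      exact (hcd.nonCrossing_bridgeSide hG a b).preimage v)
    (by
      rintro ⟨a, b, hab, h⟩
      obtain ⟨C, hC, hCba⟩ := hG.exists_isPendant_subset_bridgeSide (a := b) (b := a)
        (by rwa [Sym2.eq_swap])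
      obtain ⟨i, rfl⟩ := hPall C hC
      have hi : i ∈ v ⁻¹' G.bridgeSide a b := by simp [← h]
      exact Set.disjoint_left.mp hab.disjoint_bridgeSide hi (hCba (hv i)))
    hcard2 (by simpa using hcardℓ) (by simpa using hne1)
  obtain ⟨e⟩ : Nonempty (β ≃ A) := ⟨Fintype.equivOfCardEq (by simp [hAcard])⟩
  let φ : β ↪ α := ⟨fun x => v (e x), fun x y h => e.injective (Subtype.ext (hvinj h))⟩
  have hφ : Set.range φ = v '' A := by
    change Set.range (v ∘ Subtype.val ∘ e) = _
    rw [Set.range_comp, Set.range_comp, e.range_eq_univ, Set.image_univ, Subtype.range_coe]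
  refine ⟨φ, hφ ▸ Set.image_subset_range _ _, fun a b hab hsub => ?_⟩
  rw [hφ, Set.image_subset_iff] at hsub
  obtain ⟨k, hk, hkA⟩ := Set.exists_of_ssubset (hsub.ssubset_of_ne (hA ⟨a, b, hab, ·⟩))
  refine ⟨P k, hPpend k, (P k).supp_subset_bridgeSide hab (hv k) hk, ?_⟩
  rw [hφ, Set.disjoint_left]
  rintro _ ⟨j, hj, rfl⟩ hjk
  exact hkA (hvP j k hjk ▸ hj)

theorem stmt11_general {α β : Type*} [Fintype α] [Fintype β]
    (G : SimpleGraph α) (hG : G.Connected) (ℓ : ℕ)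
    (P : Fin ℓ → (bicompGraph G).ConnectedComponent)
    (hPinj : Function.Injective P)
    (hPpend : ∀ i, IsPendant G (P i))
    (hPall : ∀ C : (bicompGraph G).ConnectedComponent, IsPendant G C → ∃ i, P i = C)
    (v : Fin ℓ → α) (hv : ∀ i, v i ∈ (P i).supp)
    (hvnadj : ∀ i j, i ≠ j → ¬ G.Adj (v i) (v j))
    (H : SimpleGraph β) (hH : H.Connected)
    (hcard2 : 2 ≤ Fintype.card β) (hcardℓ : Fintype.card β ≤ ℓ)
    (hne1 : ℓ - Fintype.card β ≠ 1) :
    ∃ φ : β ↪ α, (∀ x : β, φ x ∈ Set.range v) ∧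
      {S : Set α | ∃ C : (bicompGraph (superpose G H φ)).ConnectedComponent,
          IsPendant (superpose G H φ) C ∧ C.supp = S} =
        {S : Set α | ∃ i : Fin ℓ, v i ∉ Set.range (⇑φ) ∧ (P i).supp = S} := by
  obtain ⟨φ, hφv, hspare⟩ :=
    exists_embedding_sparesPendantOnEachSide hG hPinj hPpend hPall hv hcard2 hcardℓ hne1
  have hφ : ∀ x y, H.Adj x y → ¬ G.Adj (φ x) (φ y) := by
    intro x y hxy
    obtain ⟨i, hi⟩ := hφv ⟨x, rfl⟩
    obtain ⟨j, hj⟩ := hφv ⟨y, rfl⟩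
    rw [← hi, ← hj]
    exact hvnadj i j fun h => H.ne_of_adj hxy (φ.injective (by rw [← hi, ← hj, h]))
  refine ⟨φ, fun x => hφv ⟨x, rfl⟩, ?_⟩
  rw [pendant_supp_superpose hG hH hφ hspare]
  ext S
  constructor
  · rintro ⟨C, hC, hCφ, rfl⟩
    obtain ⟨i, rfl⟩ := hPall C hC
    exact ⟨i, fun h => Set.disjoint_left.mp hCφ h (hv i), rfl⟩
  · rintro ⟨i, hi, rfl⟩
    refine ⟨P i, hPpend i, Set.disjoint_left.mpr fun u hu hui => hi ?_, rfl⟩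
    obtain ⟨j, rfl⟩ := hφv hu
    rwa [hPinj ((hv j).symm.trans hui)] at hu

/-- Let `G` be connected with pendant biconnected components `P 0, …, P (ℓ-1)`, `ℓ ≥ 2`,
and let `v i ∈ P i` be pairwise nonadjacent vertices. Let `H` be connected with
`2 ≤ |V(H)| ≤ ℓ` and `ℓ - |V(H)| ≠ 1`. Then there is an injective map
`φ : V(H) ↪ {v 0, …, v (ℓ-1)}` such that the set of (vertex sets of) pendant
biconnected components of `F = G ⊕_φ H` is exactly `{P i : v i ∉ φ(V(H))}`. -/
theorem stmt11 {α β : Type*} [Fintype α] [Fintype β]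
    (G : SimpleGraph α) (hG : G.Connected) (ℓ : ℕ) (hℓ : 2 ≤ ℓ)
    (P : Fin ℓ → (bicompGraph G).ConnectedComponent)
    (hPinj : Function.Injective P)
    (hPpend : ∀ i, IsPendant G (P i))
    (hPall : ∀ C : (bicompGraph G).ConnectedComponent, IsPendant G C → ∃ i, P i = C)
    (v : Fin ℓ → α) (hv : ∀ i, v i ∈ (P i).supp)
    (hvnadj : ∀ i j, i ≠ j → ¬ G.Adj (v i) (v j))
    (H : SimpleGraph β) (hH : H.Connected)
    (hcard2 : 2 ≤ Fintype.card β) (hcardℓ : Fintype.card β ≤ ℓ)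
    (hne1 : ℓ - Fintype.card β ≠ 1) :
    ∃ φ : β ↪ α, (∀ x : β, φ x ∈ Set.range v) ∧
      {S : Set α | ∃ C : (bicompGraph (superpose G H φ)).ConnectedComponent,
          IsPendant (superpose G H φ) C ∧ C.supp = S} =
        {S : Set α | ∃ i : Fin ℓ, v i ∉ Set.range (⇑φ) ∧ (P i).supp = S} :=
  stmt11_general G hG ℓ P hPinj hPpend hPall v hv hvnadj H hH hcard2 hcardℓ hne1
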